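/- Let F : [0,∞]² → Vec_𝔽 be a pointwise finite-dimensional middle-exact bipersistence module. Then the kernel K(x,y) = ker(F(x,y) → lim(F(x,∞) → F(∞,∞) ← F(∞,y))), taken objectwise, defines a subfunctor K of F such that the quotient map F → F/K is a split epimorphism in the functor category, i.e., F ≅ K ⊕ (F/K). -/

import Mathlib

open CategoryTheory CategoryTheory.Limits

/-- We regard the poset `[0,∞]² = ENNReal × ENNReal` as a category via its
product partial order. -/
noncomputable local instance (priority := 2000) : Category (ENNReal × ENNReal) :=
  Preorder.smallCategory _

/-- A commuting square `α : A ⟶ B`, `f : A ⟶ C`, `g : B ⟶ D`, `β : C ⟶ D`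
(with `α ≫ g = f ≫ β`) is *middle-exact* if the associated complex
`A ⟶ B ⊞ C ⟶ D`, with maps `(α, f)` and `(g, -β)`, is exact in the middle. -/
def MiddleExact {𝒜 : Type*} [Category 𝒜] [Abelian 𝒜] {A B C D : 𝒜}
    (α : A ⟶ B) (f : A ⟶ C) (g : B ⟶ D) (β : C ⟶ D) (w : α ≫ g = f ≫ β) : Prop :=
  (ShortComplex.mk (biprod.lift α f) (biprod.desc g (-β))
    (by simp [biprod.lift_desc, w])).Exact

/-- The square `F(x ⊓ y) → F(x) → F(x ⊔ y)`, `F(x ⊓ y) → F(y) → F(x ⊔ y)` commutes. -/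
theorem squareW {P : Type*} [Lattice P] {𝒜 : Type*} [Category 𝒜] (F : P ⥤ 𝒜) (x y : P) :
    F.map (homOfLE (inf_le_left : x ⊓ y ≤ x)) ≫ F.map (homOfLE (le_sup_left : x ≤ x ⊔ y)) =
      F.map (homOfLE (inf_le_right : x ⊓ y ≤ y)) ≫
        F.map (homOfLE (le_sup_right : y ≤ x ⊔ y)) := by
  rw [← F.map_comp, ← F.map_comp]
  exact congrArg F.map (Subsingleton.elim _ _)

/-- A functor from a lattice to an abelian category is *(2-)middle-exact* if each
square `F(x ⊓ y), F(x), F(y), F(x ⊔ y)` is middle-exact. -/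
def TwoMiddleExact {P : Type*} [Lattice P] {𝒜 : Type*} [Category 𝒜] [Abelian 𝒜]
    (F : P ⥤ 𝒜) : Prop :=
  ∀ x y : P, MiddleExact (F.map (homOfLE (inf_le_left : x ⊓ y ≤ x)))
    (F.map (homOfLE (inf_le_right : x ⊓ y ≤ y)))
    (F.map (homOfLE (le_sup_left : x ≤ x ⊔ y)))
    (F.map (homOfLE (le_sup_right : y ≤ x ⊔ y))) (squareW F x y)

variable {𝔽 : Type*} [Field 𝔽]

/-- The pullback `lim (F(x,∞) → F(∞,∞) ← F(∞,y))`, realized as a submodule of the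
product `F(x,∞) × F(∞,y)`. -/
noncomputable def pbSubmodule (F : ENNReal × ENNReal ⥤ ModuleCat 𝔽)
    (p : ENNReal × ENNReal) :
    Submodule 𝔽 (F.obj (p.1, ⊤) × F.obj (⊤, p.2)) :=
  LinearMap.ker
    ((F.map (homOfLE (⟨le_top, le_rfl⟩ : (p.1, (⊤ : ENNReal)) ≤ (⊤, ⊤)))).hom.comp
        (LinearMap.fst 𝔽 (F.obj (p.1, ⊤)) (F.obj (⊤, p.2))) -
      (F.map (homOfLE (⟨le_rfl, le_top⟩ : ((⊤ : ENNReal), p.2) ≤ (⊤, ⊤)))).hom.comp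
        (LinearMap.snd 𝔽 (F.obj (p.1, ⊤)) (F.obj (⊤, p.2))))

/-- The canonical map `F(x,y) → lim (F(x,∞) → F(∞,∞) ← F(∞,y))` induced by the
structure maps of `F`. -/
noncomputable def toPB (F : ENNReal × ENNReal ⥤ ModuleCat 𝔽) (p : ENNReal × ENNReal) :
    F.obj p →ₗ[𝔽] pbSubmodule F p :=
  LinearMap.codRestrict _
    (LinearMap.prod (F.map (homOfLE (⟨le_rfl, le_top⟩ : p ≤ (p.1, ⊤)))).hom
      (F.map (homOfLE (⟨le_top, le_rfl⟩ : p ≤ (⊤, p.2)))).hom)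
    (fun v => by
      have comm :
          F.map (homOfLE (⟨le_rfl, le_top⟩ : p ≤ (p.1, ⊤))) ≫
              F.map (homOfLE (⟨le_top, le_rfl⟩ : (p.1, (⊤ : ENNReal)) ≤ (⊤, ⊤))) =
            F.map (homOfLE (⟨le_top, le_rfl⟩ : p ≤ (⊤, p.2))) ≫
              F.map (homOfLE (⟨le_rfl, le_top⟩ : ((⊤ : ENNReal), p.2) ≤ (⊤, ⊤))) := by
        rw [← F.map_comp, ← F.map_comp]
        exact congrArg F.map (Subsingleton.elim _ _)
      simp only [pbSubmodule, LinearMap.mem_ker, LinearMap.sub_apply, LinearMap.coe_comp,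
        Function.comp_apply, LinearMap.fst_apply, LinearMap.snd_apply, LinearMap.prod_apply,
        Pi.prod]
      rw [sub_eq_zero]
      exact LinearMap.congr_fun (congrArg ModuleCat.Hom.hom comm) v)


/-!
Write `PB(p) = F(p.1, ∞) ×_{F(∞, ∞)} F(∞, p.2)`; these form a functor `PB` and `toPB` is a natural
transformation `F ⟶ PB` whose kernel is `K`. Middle exactness of the square with corners
`(x, ∞)` and `(∞, y)` says exactly that `toPB` is onto, so `F/K ≅ PB`, and it remains to find a
natural section `PB ⟶ F`.

At a point `p` on the boundary lines `x = ∞` or `y = ∞`, a section of `toPB` is unique and every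
section into such a point is natural. On a finite grid containing `∞` in both coordinates we choose
sections from the top down: at an interior point `p`, with `x`, `y` the next grid coordinates, the
square `p ≤ (x, p.2), (p.1, y) ≤ (x, y)` is middle exact, which lets us lift the two sections
already chosen at `(x, p.2)` and `(p.1, y)` to a compatible section at `p`.

Finally, being a section at `p` and commuting with the structure maps along `p ≤ q` are affine
conditions on a family of linear maps between finite-dimensional spaces, each involving at most two
points. Finite-dimensional affine spaces are linearly compact, so since every finite set of
conditions lives on a finite grid and is solvable there, all of them are solvable at once.
-/

theorem LinearMap.exists_forall_apply_eq_of_forall_exists {R U V W : Type*} [Ring R]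
    [AddCommGroup U] [AddCommGroup V] [AddCommGroup W] [Module R U] [Module R V] [Module R W]
    [Module.Projective R U] (Φ : V →ₗ[R] W) (Ψ : U →ₗ[R] W) (h : ∀ u, ∃ v, Φ v = Ψ u) :
    ∃ s : U →ₗ[R] V, ∀ u, Φ (s u) = Ψ u := by
  obtain ⟨s, hs⟩ := Module.projective_lifting_property Φ.rangeRestrict
    (Ψ.codRestrict _ fun u => (h u).imp fun _ hv => hv) Φ.surjective_rangeRestrict
  exact ⟨s, fun u => congrArg Subtype.val (LinearMap.congr_fun hs u)⟩

namespace AffineSubspace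

variable {k : Type*} [DivisionRing k]

theorem exists_forall_mem_of_directedOn {M : Type*} [AddCommGroup M] [Module k M]
    [FiniteDimensional k M] {𝒮 : Set (AffineSubspace k M)} (hne : 𝒮.Nonempty)
    (h𝒮 : ∀ S ∈ 𝒮, (S : Set M).Nonempty) (hdir : DirectedOn (· ≥ ·) 𝒮) :
    ∃ x, ∀ S ∈ 𝒮, x ∈ S := by
  obtain ⟨T, hT, hTmin⟩ := (InvImage.wf (fun S : AffineSubspace k M =>
    Module.finrank k S.direction) wellFounded_lt).has_min 𝒮 hne
  obtain ⟨x, hx⟩ := h𝒮 T hT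
  refine ⟨x, fun S hS => ?_⟩
  obtain ⟨U, hU, hUS, hUT⟩ := hdir S hS T hT
  -- by minimality of `finrank T.direction`, the subspace `U ≤ T` is all of `T`
  have hdir_eq : U.direction = T.direction :=
    Submodule.eq_of_le_of_finrank_le (direction_le hUT) (not_lt.mp (hTmin U hU))
  exact hUS ((eq_of_direction_eq_of_nonempty_of_le hdir_eq (h𝒮 U hU) hUT).symm ▸ hx)

variable {ι : Type*} {V : ι → Type*} [∀ i, AddCommGroup (V i)] [∀ i, Module k (V i)]

def FinitelySatisfiable (𝒜 : Set (AffineSubspace k (Π i, V i))) : Prop :=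
  ∀ 𝒢 ⊆ 𝒜, 𝒢.Finite → ∃ s, ∀ A ∈ 𝒢, s ∈ A

variable (k) in
def coordFiber (i : ι) (v : V i) : AffineSubspace k (Π i, V i) :=
  (affineSpan k {v}).comap (LinearMap.proj i : (Π i, V i) →ₗ[k] V i).toAffineMap

@[simp] theorem mem_coordFiber {i : ι} {v : V i} {s : Π i, V i} :
    s ∈ coordFiber k i v ↔ s i = v := by
  simp [coordFiber, mem_affineSpan_singleton]

theorem FinitelySatisfiable.exists_insert_coordFiber [∀ i, FiniteDimensional k (V i)]
    {ℳ : Set (AffineSubspace k (Π i, V i))} (hℳ : FinitelySatisfiable ℳ) (i : ι) :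
    ∃ v, FinitelySatisfiable (insert (coordFiber k i v) ℳ) := by
  let E : Set (AffineSubspace k (Π i, V i)) → AffineSubspace k (V i) := fun 𝒢 =>
    (sInf 𝒢).map (LinearMap.proj i : (Π i, V i) →ₗ[k] V i).toAffineMap
  obtain ⟨v, hv⟩ := exists_forall_mem_of_directedOn
    (𝒮 := E '' {𝒢 | 𝒢 ⊆ ℳ ∧ 𝒢.Finite}) ⟨_, ∅, ⟨Set.empty_subset _, Set.finite_empty⟩, rfl⟩
    (by
      rintro _ ⟨𝒢, ⟨h𝒢, hfin⟩, rfl⟩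
      obtain ⟨s, hs⟩ := hℳ 𝒢 h𝒢 hfin
      exact ⟨s i, mem_map_of_mem _ ((mem_sInf_iff _ _).mpr hs)⟩)
    (by
      rintro _ ⟨𝒢₁, ⟨h𝒢₁, hfin₁⟩, rfl⟩ _ ⟨𝒢₂, ⟨h𝒢₂, hfin₂⟩, rfl⟩
      refine ⟨E (𝒢₁ ∪ 𝒢₂), ⟨_, ⟨Set.union_subset h𝒢₁ h𝒢₂, hfin₁.union hfin₂⟩, rfl⟩, ?_, ?_⟩
      · exact map_mono _ (sInf_le_sInf Set.subset_union_left)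
      · exact map_mono _ (sInf_le_sInf Set.subset_union_right))
  refine ⟨v, fun 𝒢 h𝒢 hfin => ?_⟩
  obtain ⟨s, hs, hsv⟩ := mem_map.mp
    (hv _ ⟨𝒢 \ {coordFiber k i v}, ⟨by simpa using h𝒢, hfin.sdiff⟩, rfl⟩)
  refine ⟨s, fun A hA => ?_⟩
  by_cases hAi : A = coordFiber k i v
  · subst hAi; simpa using hsv
  · exact (mem_sInf_iff _ _).mp hs A ⟨hA, hAi⟩

theorem exists_forall_mem_of_forall_finset [∀ i, FiniteDimensional k (V i)] {κ : Type*}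
    (A : κ → AffineSubspace k (Π i, V i)) (hloc : ∀ j, ∃ Q : Finset ι, DependsOn (· ∈ A j) Q)
    (hfin : ∀ J : Finset κ, ∃ s, ∀ j ∈ J, s ∈ A j) :
    ∃ s, ∀ j, s ∈ A j := by
  have hA : FinitelySatisfiable (Set.range A) := fun 𝒢 h𝒢 hfin𝒢 => by
    obtain ⟨J, -, hJ, rfl⟩ := Set.exists_subset_image_finite_and.mp
      ⟨𝒢, Set.image_univ.symm ▸ h𝒢, hfin𝒢, rfl⟩
    obtain ⟨s, hs⟩ := hfin hJ.toFinset
    exact ⟨s, by rintro _ ⟨j, hj, rfl⟩; exact hs j (hJ.mem_toFinset.mpr hj)⟩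
  -- a maximal finitely satisfiable family contains a fiber over every coordinate, and these
  -- fibers single out a common point of the whole family
  obtain ⟨ℳ, hAℳ, hℳ⟩ := zorn_subset_nonempty {ℳ | FinitelySatisfiable ℳ}
    (fun c hcS hc hcne => ⟨⋃₀ c, fun 𝒢 h𝒢 hfin => by
      obtain ⟨ℳ, hℳc, h𝒢ℳ⟩ :=
        hc.directedOn.exists_mem_subset_of_finite_of_subset_sUnion hcne hfin h𝒢
      exact hcS hℳc 𝒢 h𝒢ℳ hfin, fun _ => Set.subset_sUnion_of_mem⟩) _ hA
  have hfiber : ∀ i, ∃ v, coordFiber k i v ∈ ℳ := fun i =>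
    (hℳ.1.exists_insert_coordFiber i).imp fun _ hv =>
      hℳ.2 hv (Set.subset_insert _ _) (Set.mem_insert _ _)
  choose σ hσ using hfiber
  refine ⟨σ, fun j => ?_⟩
  obtain ⟨Q, hQ⟩ := hloc j
  obtain ⟨s, hs⟩ := hℳ.1 (insert (A j) ((fun i => coordFiber k i (σ i)) '' Q))
    (Set.insert_subset (hAℳ ⟨j, rfl⟩) (Set.image_subset_iff.mpr fun i _ => hσ i))
    ((Q.finite_toSet.image _).insert _)
  have hsσ : ∀ i ∈ (Q : Set ι), s i = σ i := fun i hi =>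
    mem_coordFiber.mp (hs _ (Set.mem_insert_of_mem _ ⟨i, hi, rfl⟩))
  exact (hQ hsσ).mp (hs _ (Set.mem_insert _ _))

end AffineSubspace

universe v in
theorem ModuleCat.range_kernel_ι_app {J : Type*} [Category J] {R : Type*} [Ring R]
    {F G : J ⥤ ModuleCat.{v} R} (τ : F ⟶ G) (j : J) :
    LinearMap.range ((kernel.ι τ).app j).hom = LinearMap.ker (τ.app j).hom := by
  have e : (kernel.ι τ).app j =
      (kernelComparison τ ((evaluation J (ModuleCat.{v} R)).obj j) ≫
        (ModuleCat.kernelIsoKer (τ.app j)).hom) ≫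
        ModuleCat.ofHom (LinearMap.ker (τ.app j).hom).subtype := by
    rw [Category.assoc, ModuleCat.kernelIsoKer_hom_ker_subtype]
    exact (kernelComparison_comp_ι τ ((evaluation J (ModuleCat.{v} R)).obj j)).symm
  rw [e, ModuleCat.hom_comp, LinearMap.range_comp_of_range_eq_top, ModuleCat.hom_ofHom,
    Submodule.range_subtype]
  exact LinearMap.range_eq_top.mpr (ConcreteCategory.bijective_of_isIso _).2

theorem kernel_ι_splits_of_isSplitEpi {C : Type*} [Category C] [Abelian C] {F G : C}
    (τ : F ⟶ G) [IsSplitEpi τ] :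
    IsSplitEpi (cokernel.π (kernel.ι τ)) ∧ Nonempty (F ≅ kernel τ ⊞ cokernel (kernel.ι τ)) := by
  let r : F ⟶ kernel τ := kernel.lift τ (𝟙 F - τ ≫ section_ τ) (by simp)
  have hr : kernel.ι τ ≫ r = 𝟙 _ := by ext; simp [r]
  let s := ShortComplex.Splitting.ofExactOfRetraction _
    (ShortComplex.cokernelSequence_exact (kernel.ι τ)) r hr inferInstance
  exact ⟨s.isSplitEpi_g, ⟨s.isoBinaryBiproduct⟩⟩

theorem Finset.exists_grid_successors {α β : Type*} [LinearOrder α] [LinearOrder β]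
    {X : Finset α} {Y : Finset β} {p : α × β} {x₀ : α} {y₀ : β} (hx₀ : x₀ ∈ X) (hy₀ : y₀ ∈ Y)
    (hpx : p.1 < x₀) (hpy : p.2 < y₀) :
    ∃ x ∈ X, ∃ y ∈ Y, p.1 < x ∧ p.2 < y ∧
      ∀ q ∈ X ×ˢ Y, p < q → (x, p.2) ≤ q ∨ (p.1, y) ≤ q := by
  have hX : (X.filter (p.1 < ·)).Nonempty := ⟨x₀, Finset.mem_filter.mpr ⟨hx₀, hpx⟩⟩
  have hY : (Y.filter (p.2 < ·)).Nonempty := ⟨y₀, Finset.mem_filter.mpr ⟨hy₀, hpy⟩⟩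
  obtain ⟨hxX, hpx'⟩ := Finset.mem_filter.mp (Finset.min'_mem _ hX)
  obtain ⟨hyY, hpy'⟩ := Finset.mem_filter.mp (Finset.min'_mem _ hY)
  refine ⟨_, hxX, _, hyY, hpx', hpy', fun q hq hpq => ?_⟩
  obtain ⟨hqX, hqY⟩ := Finset.mem_product.mp hq
  rcases hpq.le.1.lt_or_eq with h1 | h1
  · exact Or.inl ⟨Finset.min'_le _ _ (Finset.mem_filter.mpr ⟨hqX, h1⟩), hpq.le.2⟩
  · have h2 : p.2 < q.2 := hpq.le.2.lt_of_ne fun h2 => hpq.ne (Prod.ext h1 h2)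
    exact Or.inr ⟨h1.le, Finset.min'_le _ _ (Finset.mem_filter.mpr ⟨hqY, h2⟩)⟩

namespace Bipersistence

section StructureMap

variable {P : Type*} [Preorder P] {R : Type*} [Ring R] (F : P ⥤ ModuleCat R)

noncomputable def res {p q : P} (h : p ≤ q) : F.obj p →ₗ[R] F.obj q :=
  (F.map (homOfLE h)).hom

theorem res_res {p q r : P} (h : p ≤ q) (h' : q ≤ r) (v : F.obj p) :
    res F h' (res F h v) = res F (h.trans h') v := by
  simp [res, ← ModuleCat.comp_apply, ← F.map_comp]

theorem res_refl {p : P} (h : p ≤ p) (v : F.obj p) : res F h v = v := by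
  simp [res]

end StructureMap

theorem _root_.TwoMiddleExact.exists_res_eq {P : Type*} [Lattice P] {R : Type*} [Ring R]
    {F : P ⥤ ModuleCat R} (hme : TwoMiddleExact F) {a b c d : P} (hc : a ⊔ b = c)
    (hd : a ⊓ b = d) (w₁ : F.obj a) (w₂ : F.obj b)
    (hw : res F (hc ▸ le_sup_left) w₁ = res F (hc ▸ le_sup_right) w₂) :
    ∃ v : F.obj d, res F (hd ▸ inf_le_left) v = w₁ ∧ res F (hd ▸ inf_le_right) v = w₂ := by
  subst hc hd
  obtain ⟨v, hv⟩ := (ShortComplex.moduleCat_exact_iff _).mp (hme a b)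
    ((ModuleCat.biprodIsoProd _ _).inv (w₁, w₂)) (by
      change ConcreteCategory.hom (biprod.desc (F.map _) (-F.map _) : F.obj a ⊞ F.obj b ⟶ _)
        ((ModuleCat.biprodIsoProd _ _).inv (w₁, w₂)) = 0
      rw [← ModuleCat.comp_apply, biprod.desc_eq, Preadditive.comp_add, ← Category.assoc,
        ← Category.assoc, ModuleCat.biprodIsoProd_inv_comp_fst,
        ModuleCat.biprodIsoProd_inv_comp_snd]
      simp only [Preadditive.comp_neg, ← sub_eq_add_neg, ModuleCat.hom_sub, ModuleCat.hom_comp,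
        ConcreteCategory.hom_ofHom, LinearMap.sub_apply, LinearMap.coe_comp, LinearMap.coe_fst,
        Function.comp_apply, LinearMap.coe_snd, sub_eq_zero]
      exact hw)
  refine ⟨v, ?_, ?_⟩
  · have := congrArg (ConcreteCategory.hom (biprod.fst : F.obj a ⊞ F.obj b ⟶ F.obj a)) hv
    rwa [ModuleCat.biprodIsoProd_inv_comp_fst_apply, ← ModuleCat.comp_apply,
      biprod.lift_fst] at this
  · have := congrArg (ConcreteCategory.hom (biprod.snd : F.obj a ⊞ F.obj b ⟶ F.obj b)) hv
    rwa [ModuleCat.biprodIsoProd_inv_comp_snd_apply, ← ModuleCat.comp_apply,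
      biprod.lift_snd] at this

section Pullback

variable (F : ENNReal × ENNReal ⥤ ModuleCat 𝔽)

theorem mem_pbSubmodule {p : ENNReal × ENNReal} (u : F.obj (p.1, ⊤) × F.obj (⊤, p.2)) :
    u ∈ pbSubmodule F p ↔
      res F (⟨le_top, le_rfl⟩ : (p.1, (⊤ : ENNReal)) ≤ (⊤, ⊤)) u.1 =
        res F (⟨le_rfl, le_top⟩ : ((⊤ : ENNReal), p.2) ≤ (⊤, ⊤)) u.2 := by
  simp only [pbSubmodule, LinearMap.mem_ker, LinearMap.sub_apply, LinearMap.comp_apply,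
    LinearMap.fst_apply, LinearMap.snd_apply, sub_eq_zero]
  rfl

theorem toPB_fst {p : ENNReal × ENNReal} (v : F.obj p) :
    (toPB F p v : F.obj (p.1, ⊤) × F.obj (⊤, p.2)).1 = res F (⟨le_rfl, le_top⟩ : p ≤ (p.1, ⊤)) v :=
  rfl

theorem toPB_snd {p : ENNReal × ENNReal} (v : F.obj p) :
    (toPB F p v : F.obj (p.1, ⊤) × F.obj (⊤, p.2)).2 = res F (⟨le_top, le_rfl⟩ : p ≤ (⊤, p.2)) v :=
  rfl

noncomputable def pbMap {p q : ENNReal × ENNReal} (h : p ≤ q) :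
    pbSubmodule F p →ₗ[𝔽] pbSubmodule F q :=
  LinearMap.codRestrict _
    (((res F (⟨h.1, le_rfl⟩ : (p.1, (⊤ : ENNReal)) ≤ (q.1, ⊤))).prodMap
        (res F (⟨le_rfl, h.2⟩ : ((⊤ : ENNReal), p.2) ≤ (⊤, q.2)))) ∘ₗ (pbSubmodule F p).subtype)
    fun u => by
      simpa only [mem_pbSubmodule, LinearMap.comp_apply, LinearMap.prodMap_apply,
        Submodule.coe_subtype, res_res] using (mem_pbSubmodule F _).mp u.2

theorem pbMap_fst {p q : ENNReal × ENNReal} (h : p ≤ q) (u : pbSubmodule F p) :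
    (pbMap F h u : F.obj (q.1, ⊤) × F.obj (⊤, q.2)).1 =
      res F (⟨h.1, le_rfl⟩ : (p.1, (⊤ : ENNReal)) ≤ (q.1, ⊤))
        (u : F.obj (p.1, ⊤) × F.obj (⊤, p.2)).1 :=
  rfl

theorem pbMap_snd {p q : ENNReal × ENNReal} (h : p ≤ q) (u : pbSubmodule F p) :
    (pbMap F h u : F.obj (q.1, ⊤) × F.obj (⊤, q.2)).2 =
      res F (⟨le_rfl, h.2⟩ : ((⊤ : ENNReal), p.2) ≤ (⊤, q.2))
        (u : F.obj (p.1, ⊤) × F.obj (⊤, p.2)).2 :=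
  rfl

theorem pbMap_pbMap {p q r : ENNReal × ENNReal} (h : p ≤ q) (h' : q ≤ r) (u : pbSubmodule F p) :
    pbMap F h' (pbMap F h u) = pbMap F (h.trans h') u :=
  Subtype.ext <| Prod.ext (res_res F _ _ _) (res_res F _ _ _)

theorem pbMap_refl {p : ENNReal × ENNReal} (h : p ≤ p) (u : pbSubmodule F p) :
    pbMap F h u = u :=
  Subtype.ext <| Prod.ext (res_refl F _ _) (res_refl F _ _)

theorem pbMap_toPB {p q : ENNReal × ENNReal} (h : p ≤ q) (v : F.obj p) :
    pbMap F h (toPB F p v) = toPB F q (res F h v) :=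
  Subtype.ext <| Prod.ext (by simp only [pbMap_fst, toPB_fst, res_res])
    (by simp only [pbMap_snd, toPB_snd, res_res])

noncomputable def pbFunctor : ENNReal × ENNReal ⥤ ModuleCat 𝔽 where
  obj p := ModuleCat.of 𝔽 (pbSubmodule F p)
  map f := ModuleCat.ofHom (pbMap F (leOfHom f))
  map_id _ := ModuleCat.hom_ext <| LinearMap.ext <| pbMap_refl F le_rfl
  map_comp f g := ModuleCat.hom_ext <| LinearMap.ext fun u =>
    (pbMap_pbMap F (leOfHom f) (leOfHom g) u).symm

noncomputable def toPBNatTrans : F ⟶ pbFunctor F where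
  app p := ModuleCat.ofHom (toPB F p : F.obj p →ₗ[𝔽] (pbFunctor F).obj p)
  naturality _ _ f :=
    ModuleCat.hom_ext <| LinearMap.ext fun v => (pbMap_toPB F (leOfHom f) v).symm

def NatSquare {p q : ENNReal × ENNReal} (h : p ≤ q) (s : pbSubmodule F p →ₗ[𝔽] F.obj p)
    (t : pbSubmodule F q →ₗ[𝔽] F.obj q) : Prop :=
  ∀ u, res F h (s u) = t (pbMap F h u)

end Pullback

variable {F : ENNReal × ENNReal ⥤ ModuleCat 𝔽}

theorem toPB_surjective (hme : TwoMiddleExact F) (p : ENNReal × ENNReal) :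
    Function.Surjective (toPB F p) := by
  intro u
  obtain ⟨v, hv₁, hv₂⟩ := hme.exists_res_eq (a := (p.1, ⊤)) (b := (⊤, p.2)) (d := p)
    (Prod.ext (sup_top_eq _) (top_sup_eq _)) (Prod.ext (inf_top_eq _) (top_inf_eq _)) _ _
    ((mem_pbSubmodule F _).mp u.2)
  exact ⟨v, Subtype.ext (Prod.ext hv₁ hv₂)⟩

theorem exists_rightInverse_toPB (hme : TwoMiddleExact F) (p : ENNReal × ENNReal) :
    ∃ s : pbSubmodule F p →ₗ[𝔽] F.obj p, Function.RightInverse s (toPB F p) :=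
  ((toPB F p).exists_rightInverse_of_surjective
    (LinearMap.range_eq_top.mpr (toPB_surjective hme p))).imp
    fun _ hs u => LinearMap.congr_fun hs u

theorem NatSquare.trans {p q r : ENNReal × ENNReal} {h : p ≤ q} {h' : q ≤ r} {s t w}
    (hst : NatSquare F h s t) (htw : NatSquare F h' t w) : NatSquare F (h.trans h') s w := by
  intro u
  rw [← res_res F h h', hst, htw, pbMap_pbMap]

theorem res_apply_pbMap_eq_fst {p b : ENNReal × ENNReal} (hpb : p ≤ b) (hb : b ≤ (p.1, ⊤))
    {s : pbSubmodule F b →ₗ[𝔽] F.obj b} (hs : Function.RightInverse s (toPB F b))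
    (u : pbSubmodule F p) :
    res F hb (s (pbMap F hpb u)) = (u : F.obj (p.1, ⊤) × F.obj (⊤, p.2)).1 := by
  rw [← res_res F (⟨le_rfl, le_top⟩ : b ≤ (b.1, ⊤)) (⟨hb.1, le_rfl⟩), ← toPB_fst, hs, pbMap_fst,
    res_res, res_refl]

theorem res_apply_pbMap_eq_snd {p a : ENNReal × ENNReal} (hpa : p ≤ a) (ha : a ≤ (⊤, p.2))
    {s : pbSubmodule F a →ₗ[𝔽] F.obj a} (hs : Function.RightInverse s (toPB F a))
    (u : pbSubmodule F p) :
    res F ha (s (pbMap F hpa u)) = (u : F.obj (p.1, ⊤) × F.obj (⊤, p.2)).2 := by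
  rw [← res_res F (⟨le_top, le_rfl⟩ : a ≤ (⊤, a.2))
    (⟨le_rfl, ha.2⟩ : ((⊤ : ENNReal), a.2) ≤ (⊤, p.2)), ← toPB_snd, hs, pbMap_snd, res_res,
    res_refl]

theorem natSquare_of_snd_eq_top {p q : ENNReal × ENNReal} (h : p ≤ q) (hq : q.2 = ⊤)
    {s : pbSubmodule F p →ₗ[𝔽] F.obj p} {t : pbSubmodule F q →ₗ[𝔽] F.obj q}
    (hs : Function.RightInverse s (toPB F p)) (ht : Function.RightInverse t (toPB F q)) :
    NatSquare F h s t := by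
  have ht_eq : ∀ w, t w =
      res F (⟨le_rfl, hq.ge⟩ : (q.1, ⊤) ≤ q) (w : F.obj (q.1, ⊤) × F.obj (⊤, q.2)).1 := fun w => by
    rw [← res_apply_pbMap_eq_fst le_rfl ⟨le_rfl, le_top⟩ ht, pbMap_refl, res_res, res_refl]
  intro u
  calc res F h (s u)
      = res F (⟨h.1, hq.ge⟩ : (p.1, ⊤) ≤ q)
          (res F (⟨le_rfl, le_top⟩ : p ≤ (p.1, ⊤)) (s (pbMap F le_rfl u))) := by
        rw [pbMap_refl, res_res]
    _ = t (pbMap F h u) := by rw [res_apply_pbMap_eq_fst _ _ hs, ht_eq, pbMap_fst, res_res]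

theorem natSquare_of_fst_eq_top {p q : ENNReal × ENNReal} (h : p ≤ q) (hq : q.1 = ⊤)
    {s : pbSubmodule F p →ₗ[𝔽] F.obj p} {t : pbSubmodule F q →ₗ[𝔽] F.obj q}
    (hs : Function.RightInverse s (toPB F p)) (ht : Function.RightInverse t (toPB F q)) :
    NatSquare F h s t := by
  have ht_eq : ∀ w, t w =
      res F (⟨hq.ge, le_rfl⟩ : (⊤, q.2) ≤ q) (w : F.obj (q.1, ⊤) × F.obj (⊤, q.2)).2 := fun w => by
    rw [← res_apply_pbMap_eq_snd le_rfl ⟨le_top, le_rfl⟩ ht, pbMap_refl, res_res, res_refl]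
  intro u
  calc res F h (s u)
      = res F (⟨hq.ge, h.2⟩ : (⊤, p.2) ≤ q)
          (res F (⟨le_top, le_rfl⟩ : p ≤ (⊤, p.2)) (s (pbMap F le_rfl u))) := by
        rw [pbMap_refl, res_res]
    _ = t (pbMap F h u) := by rw [res_apply_pbMap_eq_snd _ _ hs, ht_eq, pbMap_snd, res_res]

theorem exists_rightInverse_natSquare (hme : TwoMiddleExact F) {p a b c : ENNReal × ENNReal}
    (hd : a ⊓ b = p) (hc : a ⊔ b = c) (ha : a ≤ (⊤, p.2)) (hb : b ≤ (p.1, ⊤))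
    {sa : pbSubmodule F a →ₗ[𝔽] F.obj a} {sb : pbSubmodule F b →ₗ[𝔽] F.obj b}
    {sc : pbSubmodule F c →ₗ[𝔽] F.obj c}
    (hsa : Function.RightInverse sa (toPB F a)) (hsb : Function.RightInverse sb (toPB F b))
    (hac : NatSquare F (hc ▸ le_sup_left) sa sc) (hbc : NatSquare F (hc ▸ le_sup_right) sb sc) :
    ∃ s : pbSubmodule F p →ₗ[𝔽] F.obj p, Function.RightInverse s (toPB F p) ∧
      NatSquare F (hd ▸ inf_le_left) s sa ∧
      NatSquare F (hd ▸ inf_le_right) s sb := by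
  have hpa : p ≤ a := hd ▸ inf_le_left
  have hpb : p ≤ b := hd ▸ inf_le_right
  have lift : ∀ u, ∃ v, toPB F p v = u ∧ res F hpa v = sa (pbMap F hpa u) ∧
      res F hpb v = sb (pbMap F hpb u) := by
    intro u
    obtain ⟨v, hva, hvb⟩ := hme.exists_res_eq hc hd (sa (pbMap F hpa u)) (sb (pbMap F hpb u))
      (by rw [hac, hbc, pbMap_pbMap, pbMap_pbMap])
    refine ⟨v, Subtype.ext (Prod.ext ?_ ?_), hva, hvb⟩
    · rw [toPB_fst, ← res_res F hpb hb, hvb, res_apply_pbMap_eq_fst hpb hb hsb]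
    · rw [toPB_snd, ← res_res F hpa ha, hva, res_apply_pbMap_eq_snd hpa ha hsa]
  obtain ⟨s, hs⟩ := LinearMap.exists_forall_apply_eq_of_forall_exists
    ((toPB F p).prod ((res F hpa).prod (res F hpb)))
    (LinearMap.id.prod ((sa ∘ₗ pbMap F hpa).prod (sb ∘ₗ pbMap F hpb)))
    fun u => (lift u).imp fun v hv => by simp [hv]
  simp only [LinearMap.prod_apply, Function.prod, LinearMap.comp_apply, LinearMap.id_apply,
    Prod.mk.injEq] at hs
  exact ⟨s, fun u => (hs u).1, fun u => (hs u).2.1, fun u => (hs u).2.2⟩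

variable (F) in
abbrev SectionFamily : Type _ := ∀ p, pbSubmodule F p →ₗ[𝔽] F.obj p

variable (F) in
def IsNatSectionOn (S : Set (ENNReal × ENNReal)) (t : SectionFamily F) : Prop :=
  (∀ p ∈ S, Function.RightInverse (t p) (toPB F p)) ∧
    ∀ p ∈ S, ∀ q ∈ S, ∀ h : p ≤ q, NatSquare F h (t p) (t q)

theorem IsNatSectionOn.mono {S T : Set (ENNReal × ENNReal)} {t} (hST : S ⊆ T)
    (ht : IsNatSectionOn F T t) : IsNatSectionOn F S t :=
  ⟨fun p hp => ht.1 p (hST hp), fun p hp q hq => ht.2 p (hST hp) q (hST hq)⟩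

theorem IsNatSectionOn.insert_update {S : Set (ENNReal × ENNReal)} {t}
    (ht : IsNatSectionOn F S t)
    {p : ENNReal × ENNReal} (hpS : p ∉ S) (hmin : ∀ q ∈ S, ¬q ≤ p)
    {σ : pbSubmodule F p →ₗ[𝔽] F.obj p} (hσ : Function.RightInverse σ (toPB F p))
    (hσt : ∀ q ∈ S, ∀ h : p ≤ q, NatSquare F h σ (t q)) :
    IsNatSectionOn F (insert p S) (Function.update t p σ) := by
  have upd : ∀ q ∈ S, Function.update t p σ q = t q := fun q hq =>
    Function.update_of_ne (by rintro rfl; exact hpS hq) _ _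
  refine ⟨?_, ?_⟩
  · rintro q (rfl | hq)
    · rwa [Function.update_self]
    · rw [upd q hq]; exact ht.1 q hq
  · rintro q (rfl | hq) r (rfl | hr) h
    · intro u; rw [Function.update_self, res_refl, pbMap_refl]
    · rw [Function.update_self, upd r hr]; exact hσt r hr h
    · exact absurd h (hmin q hq)
    · rw [upd q hq, upd r hr]; exact ht.2 q hq r hr h

theorem IsNatSectionOn.exists_extension (hme : TwoMiddleExact F) {X Y : Finset ENNReal}
    (hX : ⊤ ∈ X) (hY : ⊤ ∈ Y) {S : Set (ENNReal × ENNReal)} {t} (ht : IsNatSectionOn F S t)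
    (hSG : S ⊆ ↑(X ×ˢ Y)) {p : ENNReal × ENNReal} (hp : p ∈ X ×ˢ Y) (hpS : p ∉ S)
    (habove : ∀ q ∈ X ×ˢ Y, p < q → q ∈ S) :
    ∃ σ : pbSubmodule F p →ₗ[𝔽] F.obj p, Function.RightInverse σ (toPB F p) ∧
      ∀ q ∈ S, ∀ h : p ≤ q, NatSquare F h σ (t q) := by
  obtain ⟨σ, hσ⟩ := exists_rightInverse_toPB hme p
  by_cases hp2 : p.2 = ⊤
  · exact ⟨σ, hσ, fun q hq h =>
      natSquare_of_snd_eq_top h (top_le_iff.mp (hp2 ▸ h.2)) hσ (ht.1 q hq)⟩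
  by_cases hp1 : p.1 = ⊤
  · exact ⟨σ, hσ, fun q hq h =>
      natSquare_of_fst_eq_top h (top_le_iff.mp (hp1 ▸ h.1)) hσ (ht.1 q hq)⟩
  obtain ⟨hpX, hpY⟩ := Finset.mem_product.mp hp
  obtain ⟨x, hx, y, hy, hpx, hpy, hcover⟩ := Finset.exists_grid_successors hX hY
    (lt_top_iff_ne_top.mpr hp1) (lt_top_iff_ne_top.mpr hp2)
  have haS : (x, p.2) ∈ S := habove _ (Finset.mem_product.mpr ⟨hx, hpY⟩)
    (lt_of_le_of_ne ⟨hpx.le, le_rfl⟩ fun e => hpx.ne (congrArg Prod.fst e))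
  have hbS : (p.1, y) ∈ S := habove _ (Finset.mem_product.mpr ⟨hpX, hy⟩)
    (lt_of_le_of_ne ⟨le_rfl, hpy.le⟩ fun e => hpy.ne (congrArg Prod.snd e))
  have hcS : (x, y) ∈ S := habove _ (Finset.mem_product.mpr ⟨hx, hy⟩)
    (lt_of_le_of_ne ⟨hpx.le, hpy.le⟩ fun e => hpx.ne (congrArg Prod.fst e))
  obtain ⟨σ, hσ, hσa, hσb⟩ := exists_rightInverse_natSquare hme
    (p := p) (a := (x, p.2)) (b := (p.1, y)) (c := (x, y))
    (Prod.ext (inf_eq_right.mpr hpx.le) (inf_eq_left.mpr hpy.le))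
    (Prod.ext (sup_eq_left.mpr hpx.le) (sup_eq_right.mpr hpy.le)) ⟨le_top, le_rfl⟩
    ⟨le_rfl, le_top⟩ (ht.1 _ haS) (ht.1 _ hbS) (ht.2 _ haS _ hcS _) (ht.2 _ hbS _ hcS _)
  refine ⟨σ, hσ, fun q hq h => ?_⟩
  rcases hcover q (hSG hq) (lt_of_le_of_ne h fun e => hpS (e ▸ hq)) with hq' | hq'
  · exact hσa.trans (ht.2 _ haS q hq hq')
  · exact hσb.trans (ht.2 _ hbS q hq hq')

theorem exists_isNatSectionOn_grid (hme : TwoMiddleExact F) {X Y : Finset ENNReal}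
    (hX : ⊤ ∈ X) (hY : ⊤ ∈ Y) : ∃ t, IsNatSectionOn F ↑(X ×ˢ Y) t := by
  suffices ∀ S ⊆ X ×ˢ Y, (∀ p ∈ S, ∀ q ∈ X ×ˢ Y, p ≤ q → q ∈ S) → ∃ t, IsNatSectionOn F ↑S t from
    this _ subset_rfl fun _ _ _ hq _ => hq
  intro S
  induction S using Finset.strongInduction with
  | H S ih =>
    intro hSG hup
    rcases S.eq_empty_or_nonempty with rfl | hne
    · exact ⟨0, by simp [IsNatSectionOn]⟩
    obtain ⟨p, hp⟩ := S.exists_minimal hne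
    have hmin : ∀ q ∈ S.erase p, ¬q ≤ p := fun q hq hqp =>
      (Finset.mem_erase.mp hq).1 (hp.eq_of_le (Finset.mem_erase.mp hq).2 hqp)
    obtain ⟨t, ht⟩ := ih (S.erase p) (Finset.erase_ssubset hp.prop)
      ((S.erase_subset p).trans hSG) fun a ha q hq haq =>
        Finset.mem_erase.mpr ⟨by rintro rfl; exact hmin a ha haq,
          hup a (Finset.mem_of_mem_erase ha) q hq haq⟩
    obtain ⟨σ, hσ, hσt⟩ := ht.exists_extension hme hX hY
      (fun q hq => hSG (Finset.mem_of_mem_erase hq)) (hSG hp.prop) (by simp)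
      fun q hq hpq => Finset.mem_erase.mpr ⟨hpq.ne', hup p hp.prop q hq hpq.le⟩
    refine ⟨Function.update t p σ, ?_⟩
    rw [← Finset.insert_erase hp.prop, Finset.coe_insert]
    exact ht.insert_update (by simp) hmin hσ hσt

theorem exists_isNatSectionOn_finset (hme : TwoMiddleExact F)
    (S : Finset (ENNReal × ENNReal)) :
    ∃ t, IsNatSectionOn F ↑S t := by
  obtain ⟨t, ht⟩ := exists_isNatSectionOn_grid hme
    (Finset.mem_insert_self ⊤ (S.image Prod.fst)) (Finset.mem_insert_self ⊤ (S.image Prod.snd))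
  exact ⟨t, ht.mono fun p hp => Finset.mem_product.mpr
    ⟨Finset.mem_insert_of_mem (Finset.mem_image_of_mem _ hp),
      Finset.mem_insert_of_mem (Finset.mem_image_of_mem _ hp)⟩⟩

abbrev ConstraintIndex : Type :=
  (ENNReal × ENNReal) ⊕ {pq : (ENNReal × ENNReal) × (ENNReal × ENNReal) // pq.1 ≤ pq.2}

noncomputable def ConstraintIndex.support : ConstraintIndex → Finset (ENNReal × ENNReal)
  | .inl p => {p}
  | .inr ⟨(p, q), _⟩ => {p, q}

variable (F) in
noncomputable def sectionConstraint : ConstraintIndex → AffineSubspace 𝔽 (SectionFamily F)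
  | .inl p => (affineSpan 𝔽 {LinearMap.id}).comap <|
      LinearMap.toAffineMap (V₁ := SectionFamily F) (V₂ := pbSubmodule F p →ₗ[𝔽] pbSubmodule F p)
        (LinearMap.llcomp 𝔽 _ _ _ (toPB F p) ∘ₗ LinearMap.proj p)
  | .inr ⟨(p, q), h⟩ => (affineSpan 𝔽 {0}).comap <|
      LinearMap.toAffineMap (V₁ := SectionFamily F) (V₂ := pbSubmodule F p →ₗ[𝔽] F.obj q)
        (LinearMap.llcomp 𝔽 _ _ _ (res F h) ∘ₗ LinearMap.proj p -
          LinearMap.lcomp 𝔽 _ (pbMap F h) ∘ₗ LinearMap.proj q)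

theorem mem_sectionConstraint_inl {t : SectionFamily F} {p : ENNReal × ENNReal} :
    t ∈ sectionConstraint F (.inl p) ↔ Function.RightInverse (t p) (toPB F p) := by
  simp [sectionConstraint, AffineSubspace.mem_affineSpan_singleton, LinearMap.ext_iff,
    Function.RightInverse, Function.LeftInverse]

theorem mem_sectionConstraint_inr {t : SectionFamily F} {p q : ENNReal × ENNReal} (h : p ≤ q) :
    t ∈ sectionConstraint F (.inr ⟨(p, q), h⟩) ↔ NatSquare F h (t p) (t q) := by
  simp [sectionConstraint, AffineSubspace.mem_affineSpan_singleton, LinearMap.ext_iff, NatSquare,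
    sub_eq_zero]

theorem dependsOn_mem_sectionConstraint (j : ConstraintIndex) :
    DependsOn (· ∈ sectionConstraint F j) j.support := by
  intro s s' hss'
  rcases j with p | ⟨⟨p, q⟩, h⟩
  · simp only [mem_sectionConstraint_inl, hss' p (by simp [ConstraintIndex.support])]
  · simp only [mem_sectionConstraint_inr, hss' p (by simp [ConstraintIndex.support]),
      hss' q (by simp [ConstraintIndex.support])]

theorem IsNatSectionOn.mem_sectionConstraint {t : SectionFamily F} {j : ConstraintIndex}
    {S : Set (ENNReal × ENNReal)} (ht : IsNatSectionOn F S t) (hj : ↑j.support ⊆ S) :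
    t ∈ sectionConstraint F j := by
  rcases j with p | ⟨⟨p, q⟩, h⟩
  · exact mem_sectionConstraint_inl.mpr (ht.1 p (hj (by simp [ConstraintIndex.support])))
  · exact (mem_sectionConstraint_inr h).mpr
      (ht.2 p (hj (by simp [ConstraintIndex.support])) q (hj (by simp [ConstraintIndex.support])) h)

theorem exists_isNatSectionOn_univ
    (hpfd : ∀ p : ENNReal × ENNReal, FiniteDimensional 𝔽 (F.obj p)) (hme : TwoMiddleExact F) :
    ∃ t, IsNatSectionOn F Set.univ t := by
  have : ∀ p, FiniteDimensional 𝔽 (pbSubmodule F p →ₗ[𝔽] F.obj p) := fun p =>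
    have := hpfd p; have := hpfd (p.1, ⊤); have := hpfd (⊤, p.2); inferInstance
  obtain ⟨t, ht⟩ := AffineSubspace.exists_forall_mem_of_forall_finset (sectionConstraint F)
    (fun j => ⟨j.support, dependsOn_mem_sectionConstraint j⟩) fun J => by
      obtain ⟨t, ht⟩ := exists_isNatSectionOn_finset hme (J.biUnion ConstraintIndex.support)
      exact ⟨t, fun j hj =>
        ht.mem_sectionConstraint (Finset.coe_subset.mpr (Finset.subset_biUnion_of_mem _ hj))⟩
  exact ⟨t, fun p _ => mem_sectionConstraint_inl.mp (ht (.inl p)),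
    fun p _ q _ h => (mem_sectionConstraint_inr h).mp (ht (.inr ⟨(p, q), h⟩))⟩

theorem isSplitEpi_toPBNatTrans
    (hpfd : ∀ p : ENNReal × ENNReal, FiniteDimensional 𝔽 (F.obj p)) (hme : TwoMiddleExact F) :
    IsSplitEpi (toPBNatTrans F) := by
  obtain ⟨t, ht⟩ := exists_isNatSectionOn_univ hpfd hme
  let σ : pbFunctor F ⟶ F :=
    { app p := ModuleCat.ofHom (t p)
      naturality p q f := ModuleCat.hom_ext <| LinearMap.ext fun u =>
        (ht.2 p trivial q trivial (leOfHom f) u).symm }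
  exact ⟨⟨σ, by ext p u; exact ht.1 p trivial u⟩⟩

end Bipersistence

/-- Let `F : [0,∞]² → Vec_𝔽` be a pointwise finite-dimensional, middle-exact
bipersistence module. Then the objectwise kernel
`K(x,y) = ker (F(x,y) → lim (F(x,∞) → F(∞,∞) ← F(∞,y)))` defines a subfunctor `K ↪ F`
whose quotient map `F → F/K` is a split epimorphism; in particular `F ≅ K ⊕ F/K`. -/
theorem middleExact_kernel_splits (F : ENNReal × ENNReal ⥤ ModuleCat 𝔽)
    (hpfd : ∀ p : ENNReal × ENNReal, FiniteDimensional 𝔽 (F.obj p))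
    (hme : TwoMiddleExact F) :
    ∃ (K : ENNReal × ENNReal ⥤ ModuleCat 𝔽) (ι : K ⟶ F),
      Mono ι ∧
      (∀ p : ENNReal × ENNReal, LinearMap.range (ι.app p).hom = LinearMap.ker (toPB F p)) ∧
      IsSplitEpi (cokernel.π ι) ∧
      Nonempty (F ≅ K ⊞ cokernel ι) := by
  have := Bipersistence.isSplitEpi_toPBNatTrans hpfd hme
  exact ⟨_, kernel.ι (Bipersistence.toPBNatTrans F), inferInstance,
    ModuleCat.range_kernel_ι_app _, kernel_ι_splits_of_isSplitEpi _⟩
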